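/- For every data-differentiated execution e such that EmptyRemove-Conc(e,o) holds for some rm(empty) operation o: if e∖o ⊑ SeqPQ then e ⊑ SeqPQ (step-by-step linearizability of EmptyRemove). -/

import Mathlib

open Classical

universe u v w

/-- Operation symbols of the priority queue: `put(a,p)`, `rm(a)`, and `rm(empty)`
(the latter carrying a data-value argument for uniformity). -/
inductive PQOp (D : Type u) (P : Type v) : Type (max u v) where
  | put (a : D) (p : P)
  | rm (a : D)
  | rmEmpty (a : D)

namespace PQOp
variable {D : Type u} {P : Type v}

/-- The data value of an operation symbol. -/
def val : PQOp D P → D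
  | put a _ => a
  | rm a => a
  | rmEmpty a => a

/-- Renaming of the data values of an operation symbol (priorities unchanged). -/
def rename (r : D → D) : PQOp D P → PQOp D P
  | put a p => put (r a) p
  | rm a => rm (r a)
  | rmEmpty a => rmEmpty (r a)

end PQOp

/-- Call and return actions of a concurrent execution, carrying operation identifiers. -/
inductive PQEvent (O : Type w) (D : Type u) (P : Type v) : Type (max u v w) where
  | call (o : O) (m : PQOp D P)
  | ret (o : O) (m : PQOp D P)

namespace PQEvent
variable {O : Type w} {D : Type u} {P : Type v}

/-- The operation identifier of an action. -/
def ident : PQEvent O D P → O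
  | call o _ => o
  | ret o _ => o

/-- The method (with arguments) of an action. -/
def meth : PQEvent O D P → PQOp D P
  | call _ m => m
  | ret _ m => m

/-- The data value of an action. -/
def val (a : PQEvent O D P) : D := a.meth.val

/-- Renaming of the data values of an action (identifiers and priorities unchanged). -/
def rename (r : D → D) : PQEvent O D P → PQEvent O D P
  | call o m => call o (m.rename r)
  | ret o m => ret o (m.rename r)

end PQEvent

section PQ

variable {D : Type u} {P : Type v} {O : Type w} [PartialOrder P]

/-- States of the priority-queue LTS: maps from priorities to finite sequences of values. -/
abbrev PQState (D : Type u) (P : Type v) := P → List D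

/-- The initial state of the priority-queue LTS. -/
def pqInit (D : Type u) (P : Type v) : PQState D P := fun _ => []

/-- One transition of the priority-queue LTS. -/
def pqStep (q : PQState D P) : PQOp D P → PQState D P → Prop
  | PQOp.put a p, q' => q' p = a :: q p ∧ ∀ p', p' ≠ p → q' p' = q p'
  | PQOp.rm a, q' => ∃ p l, q p = l ++ [a] ∧ q' p = l ∧ (∀ p', p' ≠ p → q' p' = q p') ∧
      (∀ p', p' < p → q p' = [])
  | PQOp.rmEmpty _, q' => q' = q ∧ ∀ p, q p = []

/-- Paths of the priority-queue LTS. -/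
inductive pqReach : PQState D P → List (PQOp D P) → PQState D P → Prop where
  | nil (q : PQState D P) : pqReach q [] q
  | cons {q q' q'' : PQState D P} {op : PQOp D P} {l : List (PQOp D P)} :
      pqStep q op q' → pqReach q' l q'' → pqReach q (op :: l) q''

/-- `SeqPQ`: the set of traces of the priority-queue LTS. -/
def SeqPQ (e : List (PQOp D P)) : Prop := ∃ q, pqReach (pqInit D P) e q

/-- A sequential execution is data-differentiated if each value is put at most once. -/
def SeqDiff (e : List (PQOp D P)) : Prop :=
  ∀ (i j : ℕ) a p p', e[i]? = some (PQOp.put a p) → e[j]? = some (PQOp.put a p') → i = j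

/-- The priorities occurring in put operations of a sequential execution. -/
def prioritiesSeq (e : List (PQOp D P)) : Set P := {p | ∃ a, PQOp.put a p ∈ e}

/-- The priorities of unmatched put operations of a sequential execution. -/
def unmatchedPrioritiesSeq (e : List (PQOp D P)) : Set P :=
  {p | ∃ a, PQOp.put a p ∈ e ∧ PQOp.rm a ∉ e}

/-- Every put is matched by a remove. -/
def matchedSeq (e : List (PQOp D P)) : Prop :=
  ∀ a p, PQOp.put a p ∈ e → PQOp.rm a ∈ e

/-- Every put with priority strictly below `p` is matched. -/
def matchedBelowSeq (e : List (PQOp D P)) (p : P) : Prop :=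
  ∀ a q, PQOp.put a q ∈ e → q < p → PQOp.rm a ∈ e

def HasEmptyRemovesSeq (e : List (PQOp D P)) : Prop := ∃ d, PQOp.rmEmpty d ∈ e

def HasUnmatchedMaxPrioritySeq (e : List (PQOp D P)) : Prop :=
  ∃ p, p ∈ prioritiesSeq e ∧ (∀ q ∈ prioritiesSeq e, ¬ p < q) ∧
    p ∈ unmatchedPrioritiesSeq e

def UnmatchedMaxPrioritySeqP (e : List (PQOp D P)) (x : D) (p : P) : Prop :=
  ∃ u v, e = u ++ PQOp.put x p :: v ∧
    (∀ q ∈ prioritiesSeq (u ++ v), ¬ p < q) ∧ p ∉ prioritiesSeq v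

def UnmatchedMaxPrioritySeq (e : List (PQOp D P)) (x : D) : Prop :=
  ∃ p, UnmatchedMaxPrioritySeqP e x p

def MatchedMaxPrioritySeqP (e : List (PQOp D P)) (x : D) (p : P) : Prop :=
  ∃ u v w, e = u ++ PQOp.put x p :: (v ++ PQOp.rm x :: w) ∧
    (∀ q ∈ prioritiesSeq (u ++ v ++ w), ¬ p < q) ∧
    (∀ q ∈ unmatchedPrioritiesSeq (u ++ v ++ w), ¬ p ≤ q) ∧
    matchedBelowSeq (u ++ v) p ∧ p ∉ prioritiesSeq (v ++ w)

def MatchedMaxPrioritySeq (e : List (PQOp D P)) (x : D) : Prop :=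
  ∃ p, MatchedMaxPrioritySeqP e x p

/-- `MatchedMaxPriority^=`: additionally at least one value other than `x` has priority `p`. -/
def MatchedMaxPriorityEqSeq (e : List (PQOp D P)) (x : D) : Prop :=
  ∃ p, MatchedMaxPrioritySeqP e x p ∧ ∃ z, z ≠ x ∧ PQOp.put z p ∈ e

noncomputable def projSeqVals (Dset : Set D) (e : List (PQOp D P)) : List (PQOp D P) :=
  e.filter fun op => decide (op.val ∈ Dset)

noncomputable def removeValSeq (x : D) (e : List (PQOp D P)) : List (PQOp D P) :=
  e.filter fun op => decide (op.val ≠ x)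

/-- Projection of a sequential execution to a set of positions. -/
noncomputable def seqProjIdx (l : List (PQOp D P)) (I : Set ℕ) : List (PQOp D P) :=
  (((List.range l.length).zip l).filter fun x => decide (x.1 ∈ I)).map Prod.snd

/-- The recursive procedure `Check-PQ-Seq`. -/
inductive CheckPQSeq : List (PQOp D P) → Prop where
  | nil : CheckPQSeq ([] : List (PQOp D P))
  | emptyRemove (u v : List (PQOp D P)) (d : D) :
      matchedSeq u → CheckPQSeq (u ++ v) →
      CheckPQSeq (u ++ PQOp.rmEmpty d :: v)
  | unmatchedMax (e : List (PQOp D P)) (x : D) :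
      ¬ HasEmptyRemovesSeq e → HasUnmatchedMaxPrioritySeq e →
      UnmatchedMaxPrioritySeq e x → CheckPQSeq (removeValSeq x e) → CheckPQSeq e
  | matchedMax (e : List (PQOp D P)) (x : D) :
      ¬ HasEmptyRemovesSeq e → ¬ HasUnmatchedMaxPrioritySeq e →
      MatchedMaxPrioritySeq e x → CheckPQSeq (removeValSeq x e) → CheckPQSeq e

/-- Well-formed (completed) executions. -/
def IsExec (e : List (PQEvent O D P)) : Prop :=
  (∀ (i j : ℕ) o m m', e[i]? = some (PQEvent.call o m) → e[j]? = some (PQEvent.call o m') → i = j) ∧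
  (∀ (i j : ℕ) o m m', e[i]? = some (PQEvent.ret o m) → e[j]? = some (PQEvent.ret o m') → i = j) ∧
  (∀ (j : ℕ) o m, e[j]? = some (PQEvent.ret o m) → ∃ i < j, e[i]? = some (PQEvent.call o m)) ∧
  (∀ (i : ℕ) o m, e[i]? = some (PQEvent.call o m) → ∃ j, i < j ∧ e[j]? = some (PQEvent.ret o m))

/-- The operations (identifiers) of an execution. -/
def opsOf (e : List (PQEvent O D P)) : Set O :=
  {o | ∃ (i : ℕ) (m : PQOp D P), e[i]? = some (PQEvent.call o m)}

/-- Operation `o` has method (and arguments) `m` in `e`. -/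
def hasMethod (e : List (PQEvent O D P)) (o : O) (m : PQOp D P) : Prop :=
  ∃ i : ℕ, e[i]? = some (PQEvent.call o m)

/-- Happens-before: the return of `o1` occurs before the call of `o2`. -/
def hb (e : List (PQEvent O D P)) (o1 o2 : O) : Prop :=
  ∃ (i j : ℕ) (m1 m2 : PQOp D P), i < j ∧ e[i]? = some (PQEvent.ret o1 m1) ∧ e[j]? = some (PQEvent.call o2 m2)

/-- `f` witnesses that the sequential execution `l` is a linearization of `e`. -/
def IsLin (e : List (PQEvent O D P)) (l : List (PQOp D P)) (f : O → ℕ) : Prop :=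
  Set.BijOn f (opsOf e) {i | i < l.length} ∧
  (∀ o m, hasMethod e o m → l[f o]? = some m) ∧
  (∀ o1 o2, hb e o1 o2 → f o1 < f o2)

/-- `e ⊑ l`: `e` is linearizable w.r.t. the sequential execution `l`. -/
def LinTo (e : List (PQEvent O D P)) (l : List (PQOp D P)) : Prop := ∃ f, IsLin e l f

/-- A concurrent execution is data-differentiated if each value is put at most once. -/
def ExecDiff (e : List (PQEvent O D P)) : Prop :=
  ∀ (i j : ℕ) o o' a p p', e[i]? = some (PQEvent.call o (PQOp.put a p)) →
    e[j]? = some (PQEvent.call o' (PQOp.put a p')) → i = j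

/-- Projection of an execution to a set of data values. -/
noncomputable def projVals (Dset : Set D) (e : List (PQEvent O D P)) : List (PQEvent O D P) :=
  e.filter fun a => decide (a.val ∈ Dset)

/-- `e ∖ x`. -/
noncomputable def removeValE (x : D) (e : List (PQEvent O D P)) : List (PQEvent O D P) :=
  e.filter fun a => decide (a.val ≠ x)

/-- `e ∖ o` for an operation identifier `o`. -/
noncomputable def removeIdE (o : O) (e : List (PQEvent O D P)) : List (PQEvent O D P) :=
  e.filter fun a => decide (a.ident ≠ o)

/-- Projection of an execution to a set of operations. -/
noncomputable def projIds (S : Set O) (e : List (PQEvent O D P)) : List (PQEvent O D P) :=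
  e.filter fun a => decide (a.ident ∈ S)

def putOccurs (e : List (PQEvent O D P)) (a : D) (p : P) : Prop :=
  ∃ o, hasMethod e o (PQOp.put a p)

def rmOccurs (e : List (PQEvent O D P)) (a : D) : Prop :=
  ∃ o, hasMethod e o (PQOp.rm a)

def prioritiesE (e : List (PQEvent O D P)) : Set P := {p | ∃ a, putOccurs e a p}

def HasEmptyRemovesE (e : List (PQEvent O D P)) : Prop :=
  ∃ o d, hasMethod e o (PQOp.rmEmpty d)

def HasUnmatchedMaxPriorityE (e : List (PQEvent O D P)) : Prop :=
  ∃ p, p ∈ prioritiesE e ∧ (∀ q ∈ prioritiesE e, ¬ p < q) ∧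
    ∃ a, putOccurs e a p ∧ ¬ rmOccurs e a

def HasMatchedMaxPriorityE (e : List (PQEvent O D P)) : Prop :=
  ¬ HasEmptyRemovesE e ∧ ¬ HasUnmatchedMaxPriorityE e

/-- `EmptyRemove-Conc(e,o)`: some linearization of `e` places the `rm(empty)` operation `o`
after a matched prefix. -/
def EmptyRemoveConc (e : List (PQEvent O D P)) (o : O) : Prop :=
  ∃ l f, IsLin e l f ∧ (∃ d, hasMethod e o (PQOp.rmEmpty d)) ∧ matchedSeq (l.take (f o))

def UnmatchedMaxPriorityConc (e : List (PQEvent O D P)) (x : D) : Prop :=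
  ∃ l, LinTo e l ∧ UnmatchedMaxPrioritySeq l x

def MatchedMaxPriorityConc (e : List (PQEvent O D P)) (x : D) : Prop :=
  ∃ l, LinTo e l ∧ MatchedMaxPrioritySeq l x

def MatchedMaxPriorityEqConc (e : List (PQEvent O D P)) (x : D) : Prop :=
  ∃ l, LinTo e l ∧ MatchedMaxPriorityEqSeq l x

/-- The recursive procedure `Check-PQ-Conc`. -/
inductive CheckPQConc : List (PQEvent O D P) → Prop where
  | nil : CheckPQConc ([] : List (PQEvent O D P))
  | emptyRemove (e : List (PQEvent O D P)) (o : O) :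
      HasEmptyRemovesE e → EmptyRemoveConc e o →
      CheckPQConc (removeIdE o e) → CheckPQConc e
  | unmatchedMax (e : List (PQEvent O D P)) (x : D) :
      ¬ HasEmptyRemovesE e → HasUnmatchedMaxPriorityE e →
      UnmatchedMaxPriorityConc e x → CheckPQConc (removeValE x e) → CheckPQConc e
  | matchedMax (e : List (PQEvent O D P)) (x : D) :
      ¬ HasEmptyRemovesE e → ¬ HasUnmatchedMaxPriorityE e →
      MatchedMaxPriorityConc e x → CheckPQConc (removeValE x e) → CheckPQConc e

/-- The procedure `Check-PQ-Conc-NonRec`: `Check-PQ-Conc` with recursive calls replaced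
by `true`. -/
def CheckPQConcNR (e : List (PQEvent O D P)) : Prop :=
  e = [] ∨
  (HasEmptyRemovesE e ∧ ∃ o, EmptyRemoveConc e o) ∨
  (¬ HasEmptyRemovesE e ∧ HasUnmatchedMaxPriorityE e ∧ ∃ x, UnmatchedMaxPriorityConc e x) ∨
  (¬ HasEmptyRemovesE e ∧ ¬ HasUnmatchedMaxPriorityE e ∧ ∃ x, MatchedMaxPriorityConc e x)

def isPutOf (e : List (PQEvent O D P)) (o : O) (a : D) : Prop :=
  ∃ p, hasMethod e o (PQOp.put a p)

def isRmOf (e : List (PQEvent O D P)) (o : O) (a : D) : Prop :=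
  hasMethod e o (PQOp.rm a)

def opValIs (e : List (PQEvent O D P)) (o : O) (a : D) : Prop :=
  isPutOf e o a ∨ isRmOf e o a

def putPutHB (e : List (PQEvent O D P)) (a b : D) : Prop :=
  ∃ o1 o2, isPutOf e o1 a ∧ isPutOf e o2 b ∧ hb e o1 o2

def putRmHB (e : List (PQEvent O D P)) (a b : D) : Prop :=
  ∃ o1 o2, isPutOf e o1 a ∧ isRmOf e o2 b ∧ hb e o1 o2

def rmRmHB (e : List (PQEvent O D P)) (a b : D) : Prop :=
  ∃ o1 o2, isRmOf e o1 a ∧ isRmOf e o2 b ∧ hb e o1 o2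

def rmPutHB (e : List (PQEvent O D P)) (a b : D) : Prop :=
  ∃ o1 o2, isRmOf e o1 a ∧ isPutOf e o2 b ∧ hb e o1 o2

/-- The values occurring in an execution. -/
def valuesOfE (e : List (PQEvent O D P)) : Set D := {a | ∃ o, opValIs e o a}

/-- The left-right constraint of `x`: edges of the graph `G`. -/
def lrEdge (e : List (PQEvent O D P)) (x : D) (d1 d2 : D) : Prop :=
  d1 ∈ valuesOfE e ∧ d2 ∈ valuesOfE e ∧
  ((d2 = x ∧ (putPutHB e d1 x ∨ putRmHB e d1 x)) ∨
   (d1 = x ∧ (rmRmHB e x d2 ∨ ¬ rmOccurs e d2)) ∨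
   putRmHB e d1 d2)

/-- `p` is the unique maximal priority occurring in `e`. -/
def UniqueMaxPriorityE (e : List (PQEvent O D P)) (p : P) : Prop :=
  p ∈ prioritiesE e ∧ ∀ q ∈ prioritiesE e, q ≠ p → q < p

/-- The values added with priority `q` in `e`. -/
def valsOfPri (e : List (PQEvent O D P)) (q : P) : Set D := {a | putOccurs e a q}

/-- For each priority, the projection of `e` to the values of that priority is
linearizable w.r.t. `SeqPQ`. -/
def SinglePriLin (e : List (PQEvent O D P)) : Prop :=
  ∀ q : P, ∃ l, SeqPQ l ∧ LinTo (projVals (valsOfPri e q) e) l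

def callPutAt (e : List (PQEvent O D P)) (a : D) (p : P) (i : ℕ) : Prop :=
  ∃ o, e[i]? = some (PQEvent.call o (PQOp.put a p))

def retPutAt (e : List (PQEvent O D P)) (a : D) (i : ℕ) : Prop :=
  ∃ o p, e[i]? = some (PQEvent.ret o (PQOp.put a p))

def callRmAt (e : List (PQEvent O D P)) (a : D) (i : ℕ) : Prop :=
  ∃ o, e[i]? = some (PQEvent.call o (PQOp.rm a))

def retRmAt (e : List (PQEvent O D P)) (a : D) (i : ℕ) : Prop :=
  ∃ o, e[i]? = some (PQEvent.ret o (PQOp.rm a))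

/-- Index `i` lies in the interval of value `z`: from `ret(put,z,_)` to `call(rm,z)`,
or to the last index of `e` if `rm(z)` is absent. -/
def InInterval (e : List (PQEvent O D P)) (z : D) (i : ℕ) : Prop :=
  ∃ j, retPutAt e z j ∧ j ≤ i ∧
    ((∃ k, callRmAt e z k ∧ i ≤ k) ∨ (¬ rmOccurs e z ∧ i ≤ e.length - 1))

/-- Gap-points of a value `x` of priority `p`. -/
def GapPoint (e : List (PQEvent O D P)) (x : D) (p : P) (i : ℕ) : Prop :=
  i < e.length ∧
  (∃ j, callPutAt e x p j ∧ j ≤ i) ∧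
  (∃ j, callRmAt e x j ∧ j ≤ i) ∧
  (∃ j, retRmAt e x j ∧ i < j) ∧
  ∀ z q, putOccurs e z q → q < p → ¬ InInterval e z i

def pbA (e : List (PQEvent O D P)) (a b : D) : Prop := putPutHB e a b
def pbB (e : List (PQEvent O D P)) (a b : D) : Prop := rmRmHB e a b
def pbC (e : List (PQEvent O D P)) (a b : D) : Prop := rmPutHB e a b
def pb (e : List (PQEvent O D P)) (a b : D) : Prop := pbA e a b ∨ pbB e a b ∨ pbC e a b
def pbStar (e : List (PQEvent O D P)) : D → D → Prop := Relation.TransGen (pb e)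

/-- The levels `UVSet_i(e,x)` (indexed from 0). -/
def UVSetN (e : List (PQEvent O D P)) (x : D) : ℕ → Set O
  | 0 => {o | ∃ a, a ≠ x ∧ opValIs e o a ∧ ∃ o', opValIs e o' a ∧
        ∃ ox, (isPutOf e ox x ∨ isRmOf e ox x) ∧ hb e o' ox}
  | n + 1 => {o | (∀ k, k ≤ n → o ∉ UVSetN e x k) ∧
        ∃ a, opValIs e o a ∧ ∃ o', opValIs e o' a ∧
          ∃ o'', o'' ∈ UVSetN e x n ∧ hb e o' o''}
  termination_by n => n
  decreasing_by all_goals omega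

def UVSet (e : List (PQEvent O D P)) (x : D) : Set O := ⋃ n, UVSetN e x n

/-- Data independence of a set of sequential executions. -/
def DataIndepSeqSet (S : Set (List (PQOp D P))) : Prop :=
  (∀ e ∈ S, ∃ e' ∈ S, SeqDiff e' ∧ ∃ r : D → D, e = e'.map (PQOp.rename r)) ∧
  (∀ e ∈ S, ∀ r : D → D, e.map (PQOp.rename r) ∈ S)

/-- Data independence of a set of (concurrent) executions. -/
def DataIndepExecSet (E : Set (List (PQEvent O D P))) : Prop :=
  (∀ e ∈ E, ∃ e' ∈ E, ExecDiff e' ∧ ∃ r : D → D, e = e'.map (PQEvent.rename r)) ∧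
  (∀ e ∈ E, ∀ r : D → D, e.map (PQEvent.rename r) ∈ E)

/-- `e|⪯p`: projection of `e` to the values whose priority is `⪯ p`. -/
noncomputable def projLE (e : List (PQEvent O D P)) (p : P) : List (PQEvent O D P) :=
  projVals {a | ∃ q, putOccurs e a q ∧ q ≤ p} e

/-- `e` is `UnmatchedMaxPriority`-linearizable. -/
def UnmatchedLin (e : List (PQEvent O D P)) : Prop :=
  HasUnmatchedMaxPriorityE e → ∃ x, UnmatchedMaxPriorityConc e x

/-- `e` is `MatchedMaxPriority`-linearizable. -/
def MatchedLin (e : List (PQEvent O D P)) : Prop :=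
  HasMatchedMaxPriorityE e → ∃ x, MatchedMaxPriorityConc e x

def comparablePri (p q : P) : Prop := p ≤ q ∨ q ≤ p

/-- The operation symbol `op` is on a value whose priority (in `l`) is comparable with `p`. -/
def opComparable (l : List (PQOp D P)) (p : P) (op : PQOp D P) : Prop :=
  ∃ q, PQOp.put op.val q ∈ l ∧ comparablePri p q

/-- `op` is a put with priority `p`. -/
def isPutPri (p : P) (op : PQOp D P) : Prop := ∃ a, op = PQOp.put a p

end PQ


section ERaux
namespace ERaux


/-- count of elements of K in [n, n+m) -/
noncomputable def cntIn (K : Set ℕ) (n m : ℕ) : ℕ :=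
  ((List.range' n m).filter (fun i => decide (i ∈ K))).length

@[simp] lemma cntIn_zero (K : Set ℕ) (n : ℕ) : cntIn K n 0 = 0 := rfl

lemma cntIn_succ_left (K : Set ℕ) (n m : ℕ) :
    cntIn K n (m+1) = (if n ∈ K then 1 else 0) + cntIn K (n+1) m := by
  unfold cntIn
  rw [List.range'_succ, List.filter_cons]
  by_cases h : n ∈ K <;> simp [h] <;> omega

lemma cntIn_succ_right (K : Set ℕ) (n m : ℕ) :
    cntIn K n (m+1) = cntIn K n m + (if (n+m) ∈ K then 1 else 0) := by
  induction m generalizing n with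
  | zero => simp [cntIn_succ_left]
  | succ m ih =>
      rw [cntIn_succ_left, ih, cntIn_succ_left K n m]
      have h1 : n + 1 + m = n + (m+1) := by omega
      rw [h1]
      omega
      
lemma cntIn_mono (K : Set ℕ) (n : ℕ) {i m : ℕ} (h : i ≤ m) :
    cntIn K n i ≤ cntIn K n m := by
  induction m with
  | zero => have : i = 0 := by omega
            subst this; exact le_refl _
  | succ m ih =>
      rcases Nat.lt_or_ge i (m+1) with h'|h'
      · have h2 := ih (by omega)
        rw [cntIn_succ_right]
        have h3 : (if (n+m) ∈ K then 1 else 0) = 1 ∨ (if (n+m) ∈ K then 1 else 0) = 0 := by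
          split
          · exact Or.inl rfl
          · exact Or.inr rfl
        omega
      · have h4 : i = m+1 := by omega
        subst h4; exact le_refl _

lemma cntIn_lt (K : Set ℕ) (n : ℕ) {i m : ℕ} (hi : i < m) (hK : (n+i) ∈ K) :
    cntIn K n i < cntIn K n m := by
  have h1 : cntIn K n (i+1) = cntIn K n i + 1 := by
    rw [cntIn_succ_right, if_pos hK]
  have := cntIn_mono K n (show i+1 ≤ m by omega)
  omega

lemma cntIn_le (K : Set ℕ) (n m : ℕ) : cntIn K n m ≤ m := by
  induction m with
  | zero => simp
  | succ m ih => rw [cntIn_succ_right]; split <;> omega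

lemma cntIn_inj (K : Set ℕ) (n : ℕ) {i j : ℕ} (hi : (n+i) ∈ K) (hj : (n+j) ∈ K)
    (h : cntIn K n i = cntIn K n j) : i = j := by
  rcases Nat.lt_trichotomy i j with h'|h'|h'
  · have := cntIn_lt K n h' hi; omega
  · exact h'
  · have := cntIn_lt K n h' hj; omega

lemma cntIn_surj (K : Set ℕ) (n : ℕ) {j m : ℕ} (h : j < cntIn K n m) :
    ∃ i, i < m ∧ (n+i) ∈ K ∧ cntIn K n i = j := by
  induction m with
  | zero => simp at h
  | succ m ih =>
      rw [cntIn_succ_right] at h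
      by_cases hK : (n+m) ∈ K
      · rw [if_pos hK] at h
        rcases Nat.lt_or_ge j (cntIn K n m) with h'|h'
        · obtain ⟨i, h1, h2, h3⟩ := ih h'
          exact ⟨i, by omega, h2, h3⟩
        · exact ⟨m, by omega, hK, by omega⟩
      · rw [if_neg hK] at h
        obtain ⟨i, h1, h2, h3⟩ := ih (by omega)
        exact ⟨i, by omega, h2, h3⟩

lemma cntIn_add_compl {K K' : Set ℕ} {n m : ℕ}
    (h : ∀ i, n ≤ i → i < n + m → (i ∈ K' ↔ ¬ i ∈ K)) :
    cntIn K n m + cntIn K' n m = m := by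
  induction m with
  | zero => simp
  | succ m ih =>
      rw [cntIn_succ_right, cntIn_succ_right]
      have hm := h (n+m) (by omega) (by omega)
      have : cntIn K n m + cntIn K' n m = m := ih (fun i h1 h2 => h i h1 (by omega))
      by_cases hK : (n+m) ∈ K
      · rw [if_pos hK, if_neg (by tauto)]; omega
      · rw [if_neg hK, if_pos (by tauto)]; omega

variable {α : Type*}

noncomputable def spAux (l : List α) (K : Set ℕ) (n : ℕ) : List α :=
  ((l.zipIdx n).filter (fun x => decide (x.2 ∈ K))).map Prod.fst

@[simp] lemma spAux_nil (K : Set ℕ) (n : ℕ) : spAux ([] : List α) K n = [] := rfl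

lemma spAux_cons (a : α) (l : List α) (K : Set ℕ) (n : ℕ) :
    spAux (a :: l) K n = (if n ∈ K then [a] else []) ++ spAux l K (n+1) := by
  unfold spAux
  rw [List.zipIdx_cons, List.filter_cons]
  by_cases h : n ∈ K <;> simp [h]

lemma spAux_length (l : List α) (K : Set ℕ) (n : ℕ) :
    (spAux l K n).length = cntIn K n l.length := by
  induction l generalizing n with
  | nil => rfl
  | cons a l ih =>
      rw [spAux_cons]
      show _ = cntIn K n (l.length + 1)
      unfold cntIn
      rw [List.range'_succ, List.filter_cons]
      by_cases h : n ∈ K <;> simp [h, ih n, ih (n+1)] <;> rfl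

lemma spAux_get {l : List α} {K : Set ℕ} {n i : ℕ} (hi : i < l.length) (hK : (n+i) ∈ K) :
    (spAux l K n)[cntIn K n i]? = l[i]? := by
  induction l generalizing n i with
  | nil => simp at hi
  | cons a l ih =>
      rw [spAux_cons]
      cases i with
      | zero =>
          simp only [Nat.add_zero] at hK
          have : cntIn K n 0 = 0 := rfl
          rw [this, if_pos hK]
          simp
      | succ i =>
          have hrec : cntIn K n (i+1) = (if n ∈ K then 1 else 0) + cntIn K (n+1) i := by
            unfold cntIn
            rw [List.range'_succ, List.filter_cons]
            by_cases h : n ∈ K <;> simp [h] <;> omega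
          rw [hrec]
          have h2 : (n+1)+i ∈ K := by
            have : n+1+i = n+(i+1) := by omega
            rw [this]; exact hK
          have h3 := ih (n := n+1) (i := i) (by simpa using Nat.lt_of_succ_lt_succ hi) h2
          by_cases h : n ∈ K
          · simp only [if_pos h, List.singleton_append,
              Nat.add_comm 1 (cntIn K (n+1) i), List.getElem?_cons_succ]
            simpa using h3
          · simp only [if_neg h, List.nil_append, Nat.zero_add]
            simpa using h3

lemma filter_eq_spAux (p : α → Bool) : ∀ (l : List α) (n : ℕ) (K : Set ℕ),
    (∀ i x, l[i]? = some x → ((n+i) ∈ K ↔ p x = true)) → l.filter p = spAux l K n := by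
  intro l
  induction l with
  | nil => intro n K _; rfl
  | cons a l ih =>
      intro n K hcond
      rw [List.filter_cons, spAux_cons]
      have h0 : n ∈ K ↔ p a = true := by
        have := hcond 0 a (by simp)
        simpa using this
      have htail : l.filter p = spAux l K (n+1) := by
        apply ih
        intro i x hx
        have := hcond (i+1) x (by simpa using hx)
        have heq : n + (i+1) = n+1+i := by omega
        rw [heq] at this
        exact this
      by_cases h : p a = true
      · rw [if_pos h, if_pos (h0.mpr h), htail]
        simp
      · rw [if_neg h, if_neg (fun hc => h (h0.mp hc)), htail]
        simp

/-- index set of positions satisfying p -/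
def Kp (l : List α) (p : α → Bool) : Set ℕ := {i | ∃ x, l[i]? = some x ∧ p x = true}

lemma filter_eq_spAux_Kp (l : List α) (p : α → Bool) : l.filter p = spAux l (Kp l p) 0 := by
  apply filter_eq_spAux
  intro i x hx
  simp only [Nat.zero_add]
  constructor
  · rintro ⟨y, hy, hpy⟩
    rw [hx] at hy
    cases hy
    exact hpy
  · intro hp
    exact ⟨x, hx, hp⟩

lemma filter_get {l : List α} {p : α → Bool} {i : ℕ} {x : α}
    (hx : l[i]? = some x) (hp : p x = true) :
    (l.filter p)[cntIn (Kp l p) 0 i]? = some x := by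
  rw [filter_eq_spAux_Kp l p]
  have hi : i < l.length := by
    rcases List.getElem?_eq_some_iff.1 hx with ⟨h, _⟩
    exact h
  rw [spAux_get hi (by simpa using ⟨x, hx, hp⟩)]
  exact hx

lemma filter_pair {l : List α} {p : α → Bool} {i j : ℕ} {x y : α}
    (hx : l[i]? = some x) (hy : l[j]? = some y) (hij : i < j)
    (hp : p x = true) (hq : p y = true) :
    ∃ i' j' : ℕ, i' < j' ∧ (l.filter p)[i']? = some x ∧ (l.filter p)[j']? = some y := by
  refine ⟨cntIn (Kp l p) 0 i, cntIn (Kp l p) 0 j, ?_, filter_get hx hp, filter_get hy hq⟩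
  exact cntIn_lt _ 0 hij (by simpa using ⟨x, hx, hp⟩)


end ERaux
end ERaux

section ERpq
namespace ERaux
open PQOp

variable {D : Type u} {P : Type v} {O : Type w} [PartialOrder P]

lemma pqReach_append {q0 q1 q2 : PQState D P} {t1 t2 : List (PQOp D P)}
    (h1 : pqReach q0 t1 q1) (h2 : pqReach q1 t2 q2) : pqReach q0 (t1 ++ t2) q2 := by
  induction h1 with
  | nil _ => exact h2
  | cons hstep _ ih => exact pqReach.cons hstep (ih h2)

lemma pqReach_split {q0 q2 : PQState D P} : ∀ {t1 t2 : List (PQOp D P)},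
    pqReach q0 (t1 ++ t2) q2 → ∃ q1, pqReach q0 t1 q1 ∧ pqReach q1 t2 q2 := by
  intro t1
  induction t1 generalizing q0 with
  | nil => intro t2 h; exact ⟨q0, pqReach.nil q0, h⟩
  | cons op t1 ih =>
      intro t2 h
      cases h with
      | cons hstep hrest =>
          obtain ⟨q1, ha, hb⟩ := ih hrest
          exact ⟨q1, pqReach.cons hstep ha, hb⟩

lemma pqReach_nil_eq {q0 q1 : PQState D P} (h : pqReach q0 ([] : List (PQOp D P)) q1) : q1 = q0 := by
  cases h; rfl

lemma pqReach_singleton {q0 q1 : PQState D P} {op : PQOp D P}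
    (h : pqReach q0 [op] q1) : pqStep q0 op q1 := by
  cases h with
  | cons hstep hrest =>
      have := pqReach_nil_eq hrest
      subst this
      exact hstep

def HputL (t : List (PQOp D P)) : Prop :=
  ∀ (i j : ℕ) (a : D) (p p' : P), t[i]? = some (PQOp.put a p) → t[j]? = some (PQOp.put a p') → i = j

lemma HputL_prefix {t : List (PQOp D P)} {op : PQOp D P} (h : HputL (t ++ [op])) : HputL t := by
  intro i j a p p' hi hj
  have hi' : i < t.length := (List.getElem?_eq_some_iff.1 hi).1
  have hj' : j < t.length := (List.getElem?_eq_some_iff.1 hj).1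
  exact h i j a p p' (by rw [List.getElem?_append_left hi']; exact hi)
    (by rw [List.getElem?_append_left hj']; exact hj)

lemma getElem?_append_last {t : List (PQOp D P)} {op : PQOp D P} :
    (t ++ [op])[t.length]? = some op := by
  rw [List.getElem?_append_right (le_refl _)]
  simp

def StInvP [DecidableEq D] (t : List (PQOp D P)) (q : PQState D P) : Prop :=
  ∀ c : D,
    (∀ p : P, c ∈ q p → (PQOp.put c p ∈ t ∧ PQOp.rm c ∉ t ∧ (q p).count c = 1 ∧
       ∀ p' : P, c ∈ q p' → p' = p)) ∧
    (PQOp.rm c ∈ t → ∃ p : P, PQOp.put c p ∈ t)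

lemma stInv [DecidableEq D] : ∀ (t : List (PQOp D P)) {q : PQState D P},
    pqReach (pqInit D P) t q → HputL t → StInvP t q := by
  intro t
  induction t using List.reverseRecOn with
  | nil =>
      intro q hr hp
      have := pqReach_nil_eq hr
      subst this
      intro c
      constructor
      · intro p hc; exact absurd hc (by simp [pqInit])
      · intro hrm; exact absurd hrm (by simp)
  | append_singleton t op ih =>
      intro q hr hp
      obtain ⟨q1, hr1, hstep1⟩ := pqReach_split hr
      have hstep := pqReach_singleton hstep1
      have IH := ih hr1 (HputL_prefix hp)
      -- fresh-value fact for puts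
      have hfresh : ∀ a p₀, op = PQOp.put a p₀ → (∀ p', a ∉ q1 p') ∧ PQOp.rm a ∉ t := by
        intro a p₀ hop
        have hnot : ∀ p'', PQOp.put a p'' ∉ t := by
          intro p'' hmem
          obtain ⟨i, hi⟩ := List.mem_iff_getElem?.1 hmem
          have hi' : i < t.length := (List.getElem?_eq_some_iff.1 hi).1
          have : i = t.length := by
            apply hp i t.length a p'' p₀
            · rw [List.getElem?_append_left hi']; exact hi
            · rw [← hop]; exact getElem?_append_last
          omega
        constructor
        · intro p' hmem
          exact hnot p' ((IH a).1 p' hmem).1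
        · intro hrm
          obtain ⟨p'', hput⟩ := (IH a).2 hrm
          exact hnot p'' hput
      cases hop : op with
      | put a p₀ =>
          subst hop
          obtain ⟨hq₀, hqo⟩ := hstep
          obtain ⟨hfr, hfrm⟩ := hfresh a p₀ rfl
          intro c
          constructor
          · intro p hc
            by_cases hcp : c = a ∧ p = p₀
            · obtain ⟨rfl, rfl⟩ := hcp
              refine ⟨by simp, ?_, ?_, ?_⟩
              · intro hmem
                rcases List.mem_append.1 hmem with h|h
                · exact hfrm h
                · simp at h
              · rw [hq₀]
                simp [List.count_cons]
                exact List.count_eq_zero.2 (hfr _)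
              · intro p' hc'
                by_contra hne
                rw [hqo p' hne] at hc'
                exact hfr p' hc'
            · -- c ≠ a or p ≠ p₀ ; in all cases c ∈ q1 p with the same p
              have hcq1 : c ∈ q1 p ∧ (c = a → p ≠ p₀) := by
                by_cases hpp : p = p₀
                · subst hpp
                  rw [hq₀] at hc
                  rcases List.mem_cons.1 hc with h|h
                  · exact absurd ⟨h, rfl⟩ hcp
                  · constructor
                    · exact h
                    · intro hca; exact absurd (hca ▸ h) (hfr p)
                · rw [hqo p hpp] at hc
                  exact ⟨hc, fun _ => hpp⟩
              obtain ⟨hcq1, hcne⟩ := hcq1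
              have hca : c ≠ a := by
                intro hca
                exact hfr p (hca ▸ hcq1)
              obtain ⟨h1, h2, h3, h4⟩ := (IH c).1 p hcq1
              refine ⟨by simp [h1], ?_, ?_, ?_⟩
              · intro hmem
                rcases List.mem_append.1 hmem with h|h
                · exact h2 h
                · simp at h
              · by_cases hpp : p = p₀
                · subst hpp
                  rw [hq₀, List.count_cons_of_ne (Ne.symm hca)]
                  rw [hq₀] at hc
                  exact h3
                · rw [hqo p hpp]
                  rw [hqo p hpp] at hc
                  exact h3
              · intro p' hc'
                by_cases hpp' : p' = p₀
                · subst hpp'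
                  rw [hq₀] at hc'
                  rcases List.mem_cons.1 hc' with h|h
                  · exact absurd h hca
                  · exact h4 p' h
                · rw [hqo p' hpp'] at hc'
                  exact h4 p' hc'
          · intro hrm
            rcases List.mem_append.1 hrm with h|h
            · obtain ⟨p'', hput⟩ := (IH c).2 h
              exact ⟨p'', by simp [hput]⟩
            · simp at h
      | rm a =>
          subst hop
          obtain ⟨p₀, lrest, hq1p, hqp, hqother, hlower⟩ := hstep
          have haq1 : a ∈ q1 p₀ := by rw [hq1p]; simp
          obtain ⟨hputa, hrma, hcnta, huniqa⟩ := (IH a).1 p₀ haq1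
          have hanl : a ∉ lrest := by
            rw [hq1p] at hcnta
            rw [List.count_append] at hcnta
            simp at hcnta
            exact List.count_eq_zero.1 hcnta
          intro c
          constructor
          · intro p hc
            have hcq1 : c ∈ q1 p := by
              by_cases hpp : p = p₀
              · subst hpp; rw [hq1p]; rw [hqp] at hc
                exact List.mem_append.2 (Or.inl hc)
              · rw [← hqother p hpp]; exact hc
            have hca : c ≠ a := by
              intro hca
              subst hca
              have hpp := huniqa p hcq1
              subst hpp
              rw [hqp] at hc
              exact hanl hc
            obtain ⟨h1, h2, h3, h4⟩ := (IH c).1 p hcq1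
            refine ⟨by simp [h1], ?_, ?_, ?_⟩
            · intro hmem
              rcases List.mem_append.1 hmem with h|h
              · exact h2 h
              · simp at h
                exact hca (by rw [h])
            · by_cases hpp : p = p₀
              · subst hpp
                rw [hqp]
                rw [hq1p, List.count_append] at h3
                simp [List.count_singleton'] at h3
                rw [if_neg (by exact fun hh => hca (by rw[hh]))] at h3
                simpa using h3
              · rw [hqother p hpp] at *
                exact h3
            · intro p' hc'
              apply h4
              by_cases hpp' : p' = p₀
              · subst hpp'; rw [hq1p]
                rw [hqp] at hc'
                exact List.mem_append.2 (Or.inl hc')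
              · rw [← hqother p' hpp']; exact hc'
          · intro hrm
            rcases List.mem_append.1 hrm with h|h
            · obtain ⟨p'', hput⟩ := (IH c).2 h
              exact ⟨p'', by simp [hput]⟩
            · simp at h
              subst h
              exact ⟨p₀, by simp [hputa]⟩
      | rmEmpty d =>
          subst hop
          obtain ⟨hq, hempty⟩ := hstep
          subst hq
          intro c
          constructor
          · intro p hc
            rw [hempty p] at hc
            simp at hc
          · intro hrm
            rcases List.mem_append.1 hrm with h|h
            · obtain ⟨p'', hput⟩ := (IH c).2 h
              exact ⟨p'', by simp [hput]⟩
            · simp at h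

end ERaux
end ERpq

section ERpq2
namespace ERaux
open PQOp

variable {D : Type u} {P : Type v} [PartialOrder P]

lemma HputL_take {t : List (PQOp D P)} (h : HputL t) (n : ℕ) : HputL (t.take n) := by
  intro i j a p p' hi hj
  have hi' : i < (t.take n).length := (List.getElem?_eq_some_iff.1 hi).1
  have hj' : j < (t.take n).length := (List.getElem?_eq_some_iff.1 hj).1
  rw [List.getElem?_take] at hi hj
  rw [if_pos (by simp at hi'; omega)] at hi
  rw [if_pos (by simp at hj'; omega)] at hj
  exact h i j a p p' hi hj

lemma reach_prefix_state {t : List (PQOp D P)} {q : PQState D P} {j : ℕ} {op : PQOp D P}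
    (hr : pqReach (pqInit D P) t q) (hj : t[j]? = some op) :
    ∃ qm q2, pqReach (pqInit D P) (t.take j) qm ∧ pqStep qm op q2 := by
  have hjl : j < t.length := (List.getElem?_eq_some_iff.1 hj).1
  have hsplit : t = t.take j ++ t.drop j := (List.take_append_drop j t).symm
  have hdrop : t.drop j = op :: t.drop (j+1) := by
    rw [List.drop_eq_getElem_cons hjl]
    congr 1
    have := List.getElem?_eq_getElem hjl
    rw [this] at hj
    exact (Option.some_inj.1 hj)
  rw [hsplit, hdrop] at hr
  obtain ⟨qm, h1, h2⟩ := pqReach_split hr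
  cases h2 with
  | cons hstep _ => exact ⟨qm, _, h1, hstep⟩

lemma rm_has_earlier_put [DecidableEq D] {t : List (PQOp D P)} {q : PQState D P} {j : ℕ} {c : D}
    (hr : pqReach (pqInit D P) t q) (hput : HputL t)
    (hj : t[j]? = some (PQOp.rm c)) :
    ∃ i < j, ∃ p : P, t[i]? = some (PQOp.put c p) := by
  obtain ⟨qm, q2, h1, hstep⟩ := reach_prefix_state hr hj
  obtain ⟨p₀, lrest, hq1p, _, _, _⟩ := hstep
  have hc : c ∈ qm p₀ := by rw [hq1p]; simp
  have hinv := stInv (t.take j) h1 (HputL_take hput j)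
  obtain ⟨hmem, _, _, _⟩ := (hinv c).1 p₀ hc
  obtain ⟨i, hi⟩ := List.mem_iff_getElem?.1 hmem
  have hi' : i < (t.take j).length := (List.getElem?_eq_some_iff.1 hi).1
  have hij : i < j := by simp at hi'; omega
  refine ⟨i, hij, p₀, ?_⟩
  rw [List.getElem?_take, if_pos hij] at hi
  exact hi

lemma rm_unique_pos [DecidableEq D] {t : List (PQOp D P)} {q : PQState D P} {i j : ℕ} {c : D}
    (hr : pqReach (pqInit D P) t q) (hput : HputL t)
    (hi : t[i]? = some (PQOp.rm c)) (hj : t[j]? = some (PQOp.rm c)) : i = j := by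
  rcases Nat.lt_trichotomy i j with h|h|h
  · exfalso
    obtain ⟨qm, q2, h1, hstep⟩ := reach_prefix_state hr hj
    obtain ⟨p₀, lrest, hq1p, _, _, _⟩ := hstep
    have hc : c ∈ qm p₀ := by rw [hq1p]; simp
    have hinv := stInv (t.take j) h1 (HputL_take hput j)
    obtain ⟨_, hnorm, _, _⟩ := (hinv c).1 p₀ hc
    apply hnorm
    apply List.mem_iff_getElem?.2
    refine ⟨i, ?_⟩
    rw [List.getElem?_take, if_pos h]
    exact hi
  · exact h
  · exfalso
    obtain ⟨qm, q2, h1, hstep⟩ := reach_prefix_state hr hi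
    obtain ⟨p₀, lrest, hq1p, _, _, _⟩ := hstep
    have hc : c ∈ qm p₀ := by rw [hq1p]; simp
    have hinv := stInv (t.take i) h1 (HputL_take hput i)
    obtain ⟨_, hnorm, _, _⟩ := (hinv c).1 p₀ hc
    apply hnorm
    apply List.mem_iff_getElem?.2
    refine ⟨j, ?_⟩
    rw [List.getElem?_take, if_pos h]
    exact hj

/-- filter a state to a value set -/
noncomputable def fq (V : Set D) (q : PQState D P) : PQState D P :=
  fun p => (q p).filter (fun d => decide (d ∈ V))

@[simp] lemma fq_init (V : Set D) : fq V (pqInit D P) = pqInit D P := by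
  funext p; rfl

lemma proj_reach {V : Set D} : ∀ (t : List (PQOp D P)) (K : Set ℕ) (n : ℕ) {q q' : PQState D P},
    pqReach q t q' →
    (∀ (i : ℕ) (a : D) (p : P), t[i]? = some (PQOp.put a p) → ((n+i) ∈ K ↔ a ∈ V)) →
    (∀ (i : ℕ) (a : D), t[i]? = some (PQOp.rm a) → ((n+i) ∈ K ↔ a ∈ V)) →
    pqReach (fq V q) (spAux t K n) (fq V q') := by
  intro t
  induction t with
  | nil =>
      intro K n q q' hr _ _
      have := pqReach_nil_eq hr
      subst this
      exact pqReach.nil _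
  | cons op rest ih =>
      intro K n q q' hr hcput hcrm
      cases hr with
      | cons hstep hrest =>
        rename_i q2
        rw [spAux_cons]
        have hput' : ∀ (i : ℕ) (a : D) (p : P), rest[i]? = some (PQOp.put a p) → ((n+1+i) ∈ K ↔ a ∈ V) := by
          intro i a p hi
          have := hcput (i+1) a p (by simpa using hi)
          rwa [show n+(i+1) = n+1+i by omega] at this
        have hrm' : ∀ (i : ℕ) (a : D), rest[i]? = some (PQOp.rm a) → ((n+1+i) ∈ K ↔ a ∈ V) := by
          intro i a hi
          have := hcrm (i+1) a (by simpa using hi)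
          rwa [show n+(i+1) = n+1+i by omega] at this
        have IH := ih K (n+1) hrest hput' hrm'
        cases hop : op with
        | put a p₀ =>
            subst hop
            obtain ⟨hq₀, hqo⟩ := hstep
            have hiff : n ∈ K ↔ a ∈ V := by
              have := hcput 0 a p₀ (by simp)
              simpa using this
            by_cases hV : a ∈ V
            · rw [if_pos (hiff.2 hV)]
              refine pqReach.cons (q' := fq V q2) ?_ IH
              constructor
              · show (fq V q2) p₀ = a :: (fq V q) p₀
                unfold fq
                rw [hq₀, List.filter_cons, if_pos (by simpa using hV)]
              · intro p' hp'
                show (fq V q2) p' = (fq V q) p'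
                unfold fq
                rw [hqo p' hp']
            · rw [if_neg (fun hK => hV (hiff.1 hK))]
              have heq : fq V q2 = fq V q := by
                funext p'
                by_cases hpp : p' = p₀
                · subst hpp
                  unfold fq
                  rw [hq₀, List.filter_cons, if_neg (by simpa using hV)]
                · unfold fq
                  rw [hqo p' hpp]
              rw [heq] at IH
              simpa using IH
        | rm a =>
            subst hop
            obtain ⟨p₀, lrest, hq1p, hqp, hqother, hlower⟩ := hstep
            have hiff : n ∈ K ↔ a ∈ V := by
              have := hcrm 0 a (by simp)
              simpa using this
            by_cases hV : a ∈ V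
            · rw [if_pos (hiff.2 hV)]
              refine pqReach.cons (q' := fq V q2) ?_ IH
              refine ⟨p₀, (lrest.filter (fun d => decide (d ∈ V))), ?_, ?_, ?_, ?_⟩
              · show (fq V q) p₀ = _
                unfold fq
                rw [hq1p, List.filter_append, List.filter_cons]
                simp [hV]
              · show (fq V q2) p₀ = _
                unfold fq
                rw [hqp]
              · intro p' hp'
                show (fq V q2) p' = (fq V q) p'
                unfold fq
                rw [hqother p' hp']
              · intro p' hp'
                show (fq V q) p' = []
                unfold fq
                rw [hlower p' hp']
                rfl
            · rw [if_neg (fun hK => hV (hiff.1 hK))]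
              have heq : fq V q2 = fq V q := by
                funext p'
                by_cases hpp : p' = p₀
                · subst hpp
                  unfold fq
                  rw [hqp, hq1p, List.filter_append, List.filter_cons]
                  simp [hV]
                · unfold fq
                  rw [hqother p' hpp]
              rw [heq] at IH
              simpa using IH
        | rmEmpty d =>
            subst hop
            obtain ⟨hq, hempty⟩ := hstep
            subst hq
            by_cases hK : n ∈ K
            · rw [if_pos hK]
              refine pqReach.cons (q' := fq V q2) ?_ IH
              refine ⟨rfl, ?_⟩
              intro p'
              show (fq V q2) p' = []
              unfold fq
              rw [hempty p']
              rfl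
            · rw [if_neg hK]
              simpa using IH

end ERaux
end ERpq2

section ERexec
namespace ERaux

variable {D : Type u} {P : Type v} {O : Type w} [PartialOrder P]

lemma hasMethod_iff_mem {e : List (PQEvent O D P)} {x : O} {m : PQOp D P} :
    hasMethod e x m ↔ PQEvent.call x m ∈ e := by
  unfold hasMethod
  rw [List.mem_iff_getElem?]

lemma method_unique {e : List (PQEvent O D P)} (he : IsExec e) {x : O} {m m' : PQOp D P}
    (h1 : hasMethod e x m) (h2 : hasMethod e x m') : m = m' := by
  obtain ⟨i, hi⟩ := h1
  obtain ⟨j, hj⟩ := h2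
  have := he.1 i j x m m' hi hj
  subst this
  rw [hi] at hj
  cases hj
  rfl

lemma hb_mem_right {e : List (PQEvent O D P)} {x y : O} (h : hb e x y) : y ∈ opsOf e := by
  obtain ⟨i, j, m1, m2, _, _, hj⟩ := h
  exact ⟨j, m2, hj⟩

lemma hb_mem_left {e : List (PQEvent O D P)} (he : IsExec e) {x y : O} (h : hb e x y) :
    x ∈ opsOf e := by
  obtain ⟨i, j, m1, m2, _, hi, _⟩ := h
  obtain ⟨i', _, hi'⟩ := he.2.2.1 i x m1 hi
  exact ⟨i', m1, hi'⟩

/-- the call of an operation comes before its return -/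
lemma call_before_ret {e : List (PQEvent O D P)} (he : IsExec e) {x : O} {m : PQOp D P} {i j : ℕ}
    (hc : e[i]? = some (PQEvent.call x m)) (hr : e[j]? = some (PQEvent.ret x m')) : i < j := by
  obtain ⟨i', hi'lt, hi'⟩ := he.2.2.1 j x m' hr
  have : i = i' := he.1 i i' x m m' hc hi'
  omega

lemma hb_irrefl {e : List (PQEvent O D P)} (he : IsExec e) (x : O) : ¬ hb e x x := by
  rintro ⟨i, j, m1, m2, hij, hi, hj⟩
  have := call_before_ret he hj hi
  omega

lemma hb_trans {e : List (PQEvent O D P)} (he : IsExec e) {x y z : O}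
    (h1 : hb e x y) (h2 : hb e y z) : hb e x z := by
  obtain ⟨i, j, m1, m2, hij, hi, hj⟩ := h1
  obtain ⟨k, l, m3, m4, hkl, hk, hl⟩ := h2
  have hjk : j < k := call_before_ret he hj hk
  exact ⟨i, l, m1, m4, by omega, hi, hl⟩

lemma hb_interval {e : List (PQEvent O D P)} {a b c d : O}
    (h1 : hb e a b) (h2 : hb e c d) : hb e a d ∨ hb e c b := by
  obtain ⟨i, j, m1, m2, hij, hi, hj⟩ := h1
  obtain ⟨k, l, m3, m4, hkl, hk, hl⟩ := h2
  rcases Nat.lt_or_ge i l with h|h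
  · exact Or.inl ⟨i, l, m1, m4, h, hi, hl⟩
  · exact Or.inr ⟨k, j, m3, m2, by omega, hk, hj⟩

lemma mem_removeIdE {e : List (PQEvent O D P)} {o : O} {ev : PQEvent O D P} :
    ev ∈ removeIdE o e ↔ ev ∈ e ∧ ev.ident ≠ o := by
  unfold removeIdE
  rw [List.mem_filter]
  simp

lemma hasMethod_removeIdE {e : List (PQEvent O D P)} {o x : O} {m : PQOp D P} (hx : x ≠ o) :
    hasMethod (removeIdE o e) x m ↔ hasMethod e x m := by
  rw [hasMethod_iff_mem, hasMethod_iff_mem, mem_removeIdE]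
  simp [PQEvent.ident, hx]

lemma opsOf_removeIdE {e : List (PQEvent O D P)} {o : O} :
    opsOf (removeIdE o e) = opsOf e \ {o} := by
  ext x
  constructor
  · rintro ⟨i, m, hi⟩
    have hmem : PQEvent.call x m ∈ removeIdE o e := List.mem_iff_getElem?.2 ⟨i, hi⟩
    rw [mem_removeIdE] at hmem
    obtain ⟨hmem, hid⟩ := hmem
    obtain ⟨i', hi'⟩ := List.mem_iff_getElem?.1 hmem
    refine ⟨⟨i', m, hi'⟩, ?_⟩
    simpa [PQEvent.ident] using hid
  · rintro ⟨⟨i, m, hi⟩, hxo⟩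
    have hxo' : x ≠ o := hxo
    have : hasMethod (removeIdE o e) x m := (hasMethod_removeIdE hxo').2 ⟨i, hi⟩
    obtain ⟨i', hi'⟩ := this
    exact ⟨i', m, hi'⟩

lemma hb_removeIdE {e : List (PQEvent O D P)} {o x y : O} (hx : x ≠ o) (hy : y ≠ o)
    (h : hb e x y) : hb (removeIdE o e) x y := by
  obtain ⟨i, j, m1, m2, hij, hi, hj⟩ := h
  obtain ⟨i', j', hij', hi', hj'⟩ := filter_pair (p := fun a => decide (a.ident ≠ o)) hi hj hij
    (by simp [PQEvent.ident, hx]) (by simp [PQEvent.ident, hy])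
  exact ⟨i', j', m1, m2, hij', hi', hj'⟩

/-- every op in opsOf has some method -/
lemma opsOf_hasMethod {e : List (PQEvent O D P)} {x : O} (h : x ∈ opsOf e) :
    ∃ m, hasMethod e x m := by
  obtain ⟨i, m, hi⟩ := h
  exact ⟨m, i, hi⟩

end ERaux
end ERexec

section ERctx
namespace ERaux

variable {D : Type u} {P : Type v} {O : Type w} [PartialOrder P]

/-- bundled context for the main proof -/
structure Ctx (e : List (PQEvent O D P)) (o : O) (g f : O → ℕ)
    (l₀ s : List (PQOp D P)) (d : D) (qend : PQState D P) : Prop where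
  he : IsExec e
  hd : ExecDiff e
  hod : hasMethod e o (PQOp.rmEmpty d)
  hgbij : Set.BijOn g (opsOf e) {i | i < l₀.length}
  hgmeth : ∀ x m, hasMethod e x m → l₀[g x]? = some m
  hghb : ∀ x y, hb e x y → g x < g y
  hmatch : matchedSeq (l₀.take (g o))
  hreach : pqReach (pqInit D P) s qend
  hfbij : Set.BijOn f (opsOf (removeIdE o e)) {i | i < s.length}
  hfmeth : ∀ x m, hasMethod (removeIdE o e) x m → s[f x]? = some m
  hfhb : ∀ x y, hb (removeIdE o e) x y → f x < f y

namespace Ctx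

variable {e : List (PQEvent O D P)} {o : O} {g f : O → ℕ}
  {l₀ s : List (PQOp D P)} {d : D} {qend : PQState D P}
  (C : Ctx e o g f l₀ s d qend)

include C

lemma ho : o ∈ opsOf e := by
  obtain ⟨i, hi⟩ := C.hod
  exact ⟨i, _, hi⟩

lemma hasMethod_mem {x : O} {m : PQOp D P} (h : hasMethod e x m) : x ∈ opsOf e := by
  obtain ⟨i, hi⟩ := h
  exact ⟨i, m, hi⟩

lemma method_o {m : PQOp D P} (h : hasMethod e o m) : m = PQOp.rmEmpty d :=
  method_unique C.he h C.hod

lemma putop_ne_o {x : O} {c : D} {p : P} (h : hasMethod e x (PQOp.put c p)) : x ≠ o := by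
  rintro rfl
  cases C.method_o h

lemma rmop_ne_o {x : O} {c : D} (h : hasMethod e x (PQOp.rm c)) : x ≠ o := by
  rintro rfl
  cases C.method_o h

lemma memOps' {x : O} (h : x ∈ opsOf e) (hx : x ≠ o) : x ∈ opsOf (removeIdE o e) := by
  rw [opsOf_removeIdE]
  exact ⟨h, hx⟩

lemma hfm {x : O} {m : PQOp D P} (hx : x ≠ o) (h : hasMethod e x m) : s[f x]? = some m :=
  C.hfmeth x m ((hasMethod_removeIdE hx).2 h)

lemma fL {x : O} (h : x ∈ opsOf e) (hx : x ≠ o) : f x < s.length :=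
  C.hfbij.mapsTo (C.memOps' h hx)

lemma hbf {x y : O} (hx : x ≠ o) (hy : y ≠ o) (h : hb e x y) : f x < f y :=
  C.hfhb x y (hb_removeIdE hx hy h)

lemma gL {x : O} (h : x ∈ opsOf e) : g x < l₀.length := C.hgbij.mapsTo h

lemma ginj {x y : O} (hx : x ∈ opsOf e) (hy : y ∈ opsOf e) (h : g x = g y) : x = y :=
  C.hgbij.injOn hx hy h

lemma finj {x y : O} (hx : x ∈ opsOf e) (hxo : x ≠ o) (hy : y ∈ opsOf e) (hyo : y ≠ o)
    (h : f x = f y) : x = y :=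
  C.hfbij.injOn (C.memOps' hx hxo) (C.memOps' hy hyo) h

lemma putOpUnique {x y : O} {c : D} {p p' : P}
    (h1 : hasMethod e x (PQOp.put c p)) (h2 : hasMethod e y (PQOp.put c p')) :
    x = y ∧ p = p' := by
  obtain ⟨i, hi⟩ := h1
  obtain ⟨j, hj⟩ := h2
  have := C.hd i j x y c p p' hi hj
  subst this
  rw [hi] at hj
  cases hj
  exact ⟨rfl, rfl⟩

lemma sPosOp {i : ℕ} (hi : i < s.length) : ∃ x, x ∈ opsOf e ∧ x ≠ o ∧ f x = i := by
  obtain ⟨x, hx, hfx⟩ := C.hfbij.surjOn (show i ∈ {j | j < s.length} from hi)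
  rw [opsOf_removeIdE] at hx
  exact ⟨x, hx.1, hx.2, hfx⟩

lemma HputS : HputL s := by
  intro i j a p p' hi hj
  obtain ⟨x, hx, hxo, hfx⟩ := C.sPosOp (List.getElem?_eq_some_iff.1 hi).1
  obtain ⟨y, hy, hyo, hfy⟩ := C.sPosOp (List.getElem?_eq_some_iff.1 hj).1
  obtain ⟨mx, hmx⟩ := opsOf_hasMethod hx
  obtain ⟨my, hmy⟩ := opsOf_hasMethod hy
  have hmx' := C.hfm hxo hmx
  have hmy' := C.hfm hyo hmy
  rw [hfx, hi] at hmx'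
  rw [hfy, hj] at hmy'
  cases hmx'
  cases hmy'
  obtain ⟨hxy, _⟩ := C.putOpUnique hmx hmy
  rw [← hfx, ← hfy, hxy]

lemma rmOpUnique {x y : O} {c : D} (h1 : hasMethod e x (PQOp.rm c))
    (h2 : hasMethod e y (PQOp.rm c)) : x = y := by
  have hxo := C.rmop_ne_o h1
  have hyo := C.rmop_ne_o h2
  have hx := C.hasMethod_mem h1
  have hy := C.hasMethod_mem h2
  have h1' := C.hfm hxo h1
  have h2' := C.hfm hyo h2
  have := rm_unique_pos (D := D) C.hreach C.HputS h1' h2'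
  exact C.finj hx hxo hy hyo this

lemma noRmPut {r x : O} {c : D} {p : P} (hr : hasMethod e r (PQOp.rm c))
    (hx : hasMethod e x (PQOp.put c p)) : ¬ hb e r x := by
  intro hhb
  have hro := C.rmop_ne_o hr
  have hxo := C.putop_ne_o hx
  have hrm := C.hasMethod_mem hr
  have hxm := C.hasMethod_mem hx
  have hsr := C.hfm hro hr
  obtain ⟨i, hij, p'', hi⟩ := rm_has_earlier_put (D := D) C.hreach C.HputS hsr
  obtain ⟨y, hy, hyo, hfy⟩ := C.sPosOp (by
    have := C.fL hrm hro
    omega : i < s.length)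
  obtain ⟨my, hmy⟩ := opsOf_hasMethod hy
  have hmy' := C.hfm hyo hmy
  rw [hfy, hi] at hmy'
  cases hmy'
  obtain ⟨rfl, _⟩ := C.putOpUnique hmy hx
  have := C.hbf hro hyo hhb
  omega

lemma matchedU {x : O} {c : D} {p : P} (hx : x ∈ opsOf e)
    (hm : hasMethod e x (PQOp.put c p)) (hg : g x < g o) :
    ∃ r, r ∈ opsOf e ∧ r ≠ o ∧ hasMethod e r (PQOp.rm c) ∧ g r < g o := by
  have hmem : PQOp.put c p ∈ l₀.take (g o) := by
    apply List.mem_iff_getElem?.2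
    refine ⟨g x, ?_⟩
    rw [List.getElem?_take, if_pos hg]
    exact C.hgmeth x _ hm
  have hrmem := C.hmatch c p hmem
  obtain ⟨i, hi⟩ := List.mem_iff_getElem?.1 hrmem
  have hilt : i < g o := by
    have := (List.getElem?_eq_some_iff.1 hi).1
    simp at this
    omega
  rw [List.getElem?_take, if_pos hilt] at hi
  have hiL : i < l₀.length := (List.getElem?_eq_some_iff.1 hi).1
  obtain ⟨r, hrops, hgr⟩ := C.hgbij.surjOn (show i ∈ {j | j < l₀.length} from hiL)
  obtain ⟨mr, hmr⟩ := opsOf_hasMethod hrops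
  have := C.hgmeth r mr hmr
  rw [hgr, hi] at this
  cases this
  refine ⟨r, hrops, ?_, hmr, by rw [hgr]; exact hilt⟩
  intro hro
  subst hro
  cases C.method_o hmr

lemma rmHasPut {r : O} {c : D} (hr : hasMethod e r (PQOp.rm c)) :
    ∃ x p, x ∈ opsOf e ∧ x ≠ o ∧ hasMethod e x (PQOp.put c p) := by
  have hro := C.rmop_ne_o hr
  have hrm := C.hasMethod_mem hr
  have hsr := C.hfm hro hr
  obtain ⟨i, hij, p'', hi⟩ := rm_has_earlier_put (D := D) C.hreach C.HputS hsr
  obtain ⟨y, hy, hyo, hfy⟩ := C.sPosOp (by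
    have := C.fL hrm hro
    omega : i < s.length)
  obtain ⟨my, hmy⟩ := opsOf_hasMethod hy
  have hmy' := C.hfm hyo hmy
  rw [hfy, hi] at hmy'
  cases hmy'
  exact ⟨y, p'', hy, hyo, hmy⟩

end Ctx
end ERaux
end ERctx

section ERU
namespace ERaux

variable {D : Type u} {P : Type v} {O : Type w} [PartialOrder P]

def CinP (e : List (PQEvent O D P)) (g : O → ℕ) (o x r : O) : Prop :=
  ∀ z ∈ opsOf e, (hb e z x ∨ hb e z r) → g z < g o

def Pulled (e : List (PQEvent O D P)) (g : O → ℕ) (o x : O) : Prop :=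
  ∃ (c : D) (p : P) (r : O), hasMethod e x (PQOp.put c p) ∧ g o < g x ∧
    hasMethod e r (PQOp.rm c) ∧ g r < g o ∧ CinP e g o x r

def Pushed (e : List (PQEvent O D P)) (g : O → ℕ) (o x : O) : Prop :=
  ∃ (c : D) (pp : O) (p : P), hasMethod e x (PQOp.rm c) ∧ g x < g o ∧
    hasMethod e pp (PQOp.put c p) ∧ g o < g pp ∧ ¬ CinP e g o pp x

def inU (e : List (PQEvent O D P)) (g : O → ℕ) (o x : O) : Prop :=
  x ∈ opsOf e ∧ x ≠ o ∧ ((g x < g o ∧ ¬ Pushed e g o x) ∨ Pulled e g o x)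

namespace Ctx

variable {e : List (PQEvent O D P)} {o : O} {g f : O → ℕ}
  {l₀ s : List (PQOp D P)} {d : D} {qend : PQState D P}
  (C : Ctx e o g f l₀ s d qend)

include C

lemma U_b {x : O} (h : inU e g o x) : ¬ hb e o x := by
  obtain ⟨hx, hxo, hcase⟩ := h
  intro hhb
  rcases hcase with ⟨hlt, _⟩ | ⟨c, p, r, hm, hgx, hrm, hgr, hcin⟩
  · have := C.hghb o x hhb
    omega
  · have := hcin o C.ho (Or.inl hhb)
    omega

lemma U_pred {x : O} (h : hb e x o) : inU e g o x := by
  have hx := hb_mem_left C.he h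
  have hxo : x ≠ o := by
    rintro rfl
    exact hb_irrefl C.he _ h
  refine ⟨hx, hxo, Or.inl ⟨C.hghb x o h, ?_⟩⟩
  rintro ⟨c, pp, p, hxm, _, hppm, hgpp, hnc⟩
  apply hnc
  intro z hz hor
  rcases hor with h1 | h1
  · rcases hb_interval h1 h with h2 | h2
    · exact C.hghb z o h2
    · exact absurd h2 (C.noRmPut hxm hppm)
  · have := hb_trans C.he h1 h
    exact C.hghb z o this

lemma U_closed {x y : O} (h : hb e x y) (hy : inU e g o y) : inU e g o x := by
  have hx := hb_mem_left C.he h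
  have hxo : x ≠ o := by
    rintro rfl
    exact C.U_b hy h
  obtain ⟨hym, hyo, hcase⟩ := hy
  rcases hcase with ⟨hylt, _⟩ | ⟨c, p, r, hym', hgy, hrm, hgr, hcin⟩
  · have hxlt : g x < g o := by
      have := C.hghb x y h
      omega
    refine ⟨hx, hxo, Or.inl ⟨hxlt, ?_⟩⟩
    rintro ⟨c, pp, pr, hxm, _, hppm, hgpp, hnc⟩
    apply hnc
    intro z hz hor
    rcases hor with h1 | h1
    · rcases hb_interval h1 h with h2 | h2
      · have := C.hghb z y h2
        omega
      · exact absurd h2 (C.noRmPut hxm hppm)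
    · have := C.hghb z y (hb_trans C.he h1 h)
      omega
  · have hxlt : g x < g o := hcin x hx (Or.inl h)
    refine ⟨hx, hxo, Or.inl ⟨hxlt, ?_⟩⟩
    rintro ⟨c2, pp2, p2, hxm, _, hpp2, hgpp2, hnc2⟩
    apply hnc2
    intro z hz hor
    rcases hor with h1 | h1
    · rcases hb_interval h1 h with h2 | h2
      · exact hcin z hz (Or.inl h2)
      · exact absurd h2 (C.noRmPut hxm hpp2)
    · exact hcin z hz (Or.inl (hb_trans C.he h1 h))

lemma U_vc1 {x : O} {c : D} {p : P} (hm : hasMethod e x (PQOp.put c p))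
    (h : inU e g o x) : ∃ r, hasMethod e r (PQOp.rm c) ∧ inU e g o r := by
  obtain ⟨hx, hxo, hcase⟩ := h
  rcases hcase with ⟨hlt, _⟩ | ⟨c1, p1, r, hm1, hgx, hrm, hgr, hcin⟩
  · obtain ⟨r, hrmem, hro, hrm, hgr⟩ := C.matchedU hx hm hlt
    refine ⟨r, hrm, hrmem, hro, Or.inl ⟨hgr, ?_⟩⟩
    rintro ⟨c2, pp, p2, hrm2, _, hppm, hgpp, hnc⟩
    have hc2 : c2 = c := by
      have := method_unique C.he hrm2 hrm
      cases this
      rfl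
    subst hc2
    obtain ⟨rfl, _⟩ := C.putOpUnique hppm hm
    omega
  · have hcc : c1 = c ∧ p1 = p := by
      have := method_unique C.he hm1 hm
      cases this
      exact ⟨rfl, rfl⟩
    obtain ⟨rfl, rfl⟩ := hcc
    refine ⟨r, hrm, C.hasMethod_mem hrm, C.rmop_ne_o hrm, Or.inl ⟨hgr, ?_⟩⟩
    rintro ⟨c2, pp, p2, hrm2, _, hppm, hgpp, hnc⟩
    have hc2 : c2 = c1 := by
      have := method_unique C.he hrm2 hrm
      cases this
      rfl
    subst hc2
    obtain ⟨rfl, _⟩ := C.putOpUnique hppm hm1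
    exact hnc hcin

lemma U_vc2 {x : O} {c : D} (hm : hasMethod e x (PQOp.rm c))
    (h : inU e g o x) : ∃ y pr, hasMethod e y (PQOp.put c pr) ∧ inU e g o y := by
  obtain ⟨hx, hxo, hcase⟩ := h
  rcases hcase with ⟨hlt, hnp⟩ | ⟨c1, p1, r, hm1, hgx, hrm, hgr, hcin⟩
  · obtain ⟨y, pr, hy, hyo, hym⟩ := C.rmHasPut hm
    have hyne : g y ≠ g o := by
      intro hEq
      exact hyo (C.ginj hy C.ho hEq)
    rcases Nat.lt_or_ge (g y) (g o) with hgy | hgy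
    · refine ⟨y, pr, hym, hy, hyo, Or.inl ⟨hgy, ?_⟩⟩
      rintro ⟨c2, pp, p2, hym2, _, _, _, _⟩
      have := method_unique C.he hym2 hym
      cases this
    · have hgy' : g o < g y := by omega
      have hcin : CinP e g o y x := by
        by_contra hnc
        exact hnp ⟨c, y, pr, hm, hlt, hym, hgy', hnc⟩
      exact ⟨y, pr, hym, hy, hyo, Or.inr ⟨c, pr, x, hym, hgy', hm, hlt, hcin⟩⟩
  · exfalso
    have := method_unique C.he hm1 hm
    cases this

end Ctx
end ERaux
end ERU

section ERmain
namespace ERaux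
namespace Ctx

variable {D : Type u} {P : Type v} {O : Type w} [PartialOrder P]
variable {e : List (PQEvent O D P)} {o : O} {g f : O → ℕ}
  {l₀ s : List (PQOp D P)} {d : D} {qend : PQState D P}
  (C : Ctx e o g f l₀ s d qend)

include C

lemma main : ∃ l, SeqPQ l ∧ LinTo e l := by
  classical
  set V1 : Set D := {c | ∃ x, inU e g o x ∧
    ((∃ pr : P, hasMethod e x (PQOp.put c pr)) ∨ hasMethod e x (PQOp.rm c))} with hV1def
  set K1 : Set ℕ := {i | ∃ x, inU e g o x ∧ f x = i} with hK1def
  set K2 : Set ℕ := {i | i < s.length ∧ i ∉ K1} with hK2def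
  set B1 : List (PQOp D P) := spAux s K1 0 with hB1def
  set B2 : List (PQOp D P) := spAux s K2 0 with hB2def
  set L : List (PQOp D P) := B1 ++ PQOp.rmEmpty d :: B2 with hLdef
  -- basic facts about U members
  have hUops : ∀ x, inU e g o x → x ∈ opsOf e ∧ x ≠ o := fun x hx => ⟨hx.1, hx.2.1⟩
  have hK1lt : ∀ i ∈ K1, i < s.length := by
    rintro i ⟨x, hx, rfl⟩
    exact C.fL (hUops x hx).1 (hUops x hx).2
  have hK1iff : ∀ x, x ∈ opsOf e → x ≠ o → (f x ∈ K1 ↔ inU e g o x) := by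
    intro x hx hxo
    constructor
    · rintro ⟨y, hy, hfy⟩
      have : y = x := C.finj (hUops y hy).1 (hUops y hy).2 hx hxo hfy
      rwa [← this]
    · intro h
      exact ⟨x, h, rfl⟩
  -- value closedness
  have hV1E : ∀ c ∈ V1, ∀ y : O,
      ((∃ pr : P, hasMethod e y (PQOp.put c pr)) ∨ hasMethod e y (PQOp.rm c)) →
      inU e g o y := by
    rintro c ⟨x, hxU, hxval⟩ y hyval
    rcases hxval with ⟨pr, hxm⟩ | hxm
    · rcases hyval with ⟨pr', hym⟩ | hym
      · obtain ⟨rfl, _⟩ := C.putOpUnique hym hxm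
        exact hxU
      · obtain ⟨r, hrm, hrU⟩ := C.U_vc1 hxm hxU
        have : r = y := C.rmOpUnique hrm hym
        rwa [← this]
    · rcases hyval with ⟨pr', hym⟩ | hym
      · obtain ⟨y', pr2, hy'm, hy'U⟩ := C.U_vc2 hxm hxU
        obtain ⟨rfl, _⟩ := C.putOpUnique hym hy'm
        exact hy'U
      · have : x = y := C.rmOpUnique hxm hym
        rwa [← this]
  -- the operation sitting at a position of s
  have hPosMeth : ∀ (i : ℕ) (m : PQOp D P), s[i]? = some m →
      ∃ x, x ∈ opsOf e ∧ x ≠ o ∧ f x = i ∧ hasMethod e x m := by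
    intro i m hi
    obtain ⟨x, hx, hxo, hfx⟩ := C.sPosOp (List.getElem?_eq_some_iff.1 hi).1
    obtain ⟨mx, hmx⟩ := opsOf_hasMethod hx
    have := C.hfm hxo hmx
    rw [hfx, hi] at this
    cases this
    exact ⟨x, hx, hxo, hfx, hmx⟩
  -- keep conditions
  have hkeep_put : ∀ (i : ℕ) (a : D) (p : P), s[i]? = some (PQOp.put a p) → (i ∈ K1 ↔ a ∈ V1) := by
    intro i a p hi
    obtain ⟨x, hx, hxo, hfx, hxm⟩ := hPosMeth i _ hi
    constructor
    · intro hiK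
      rw [← hfx] at hiK
      exact ⟨x, (hK1iff x hx hxo).1 hiK, Or.inl ⟨p, hxm⟩⟩
    · intro haV
      have := hV1E a haV x (Or.inl ⟨p, hxm⟩)
      rw [← hfx]
      exact (hK1iff x hx hxo).2 this
  have hkeep_rm : ∀ (i : ℕ) (a : D), s[i]? = some (PQOp.rm a) → (i ∈ K1 ↔ a ∈ V1) := by
    intro i a hi
    obtain ⟨x, hx, hxo, hfx, hxm⟩ := hPosMeth i _ hi
    constructor
    · intro hiK
      rw [← hfx] at hiK
      exact ⟨x, (hK1iff x hx hxo).1 hiK, Or.inr hxm⟩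
    · intro haV
      have := hV1E a haV x (Or.inr hxm)
      rw [← hfx]
      exact (hK1iff x hx hxo).2 this
  -- block 1 reaches the filtered final state
  have reach1 : pqReach (pqInit D P) B1 (fq V1 qend) := by
    have := proj_reach (V := V1) s K1 0 C.hreach
      (by intro i a p hi; simpa using hkeep_put i a p hi)
      (by intro i a hi; simpa using hkeep_rm i a hi)
    simpa using this
  -- block 1 final state is empty
  have hV1empty : fq V1 qend = pqInit D P := by
    funext p
    show (qend p).filter (fun c => decide (c ∈ V1)) = []
    rw [List.filter_eq_nil_iff]
    intro c hc
    simp only [decide_eq_true_eq]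
    intro hcV
    have hinv := stInv s C.hreach C.HputS
    obtain ⟨_, hnorm, _, _⟩ := (hinv c).1 p hc
    apply hnorm
    obtain ⟨x, hxU, hxval⟩ := hcV
    rcases hxval with ⟨pr, hxm⟩ | hxm
    · obtain ⟨r, hrm, hrU⟩ := C.U_vc1 hxm hxU
      have := C.hfm (hUops r hrU).2 hrm
      exact List.mem_iff_getElem?.2 ⟨f r, this⟩
    · have := C.hfm (hUops x hxU).2 hxm
      exact List.mem_iff_getElem?.2 ⟨f x, this⟩
  -- block 2 runs from the empty state
  have reach2 : pqReach (pqInit D P) B2 (fq {a | a ∉ V1} qend) := by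
    have := proj_reach (V := {a | a ∉ V1}) s K2 0 C.hreach
      (by
        intro i a p hi
        have h1 := hkeep_put i a p hi
        have h2 : i < s.length := (List.getElem?_eq_some_iff.1 hi).1
        simp only [Nat.zero_add, hK2def, Set.mem_setOf_eq]
        constructor
        · rintro ⟨_, hni⟩
          exact fun hV => hni (h1.2 hV)
        · intro hnV
          exact ⟨h2, fun hK => hnV (h1.1 hK)⟩)
      (by
        intro i a hi
        have h1 := hkeep_rm i a hi
        have h2 : i < s.length := (List.getElem?_eq_some_iff.1 hi).1
        simp only [Nat.zero_add, hK2def, Set.mem_setOf_eq]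
        constructor
        · rintro ⟨_, hni⟩
          exact fun hV => hni (h1.2 hV)
        · intro hnV
          exact ⟨h2, fun hK => hnV (h1.1 hK)⟩)
    simpa using this
  -- SeqPQ L
  have hSeq : SeqPQ L := by
    refine ⟨fq {a | a ∉ V1} qend, ?_⟩
    rw [hV1empty] at reach1
    apply pqReach_append reach1
    exact pqReach.cons (q' := pqInit D P) ⟨rfl, fun p => rfl⟩ reach2
  -- lengths
  have hB1len : B1.length = cntIn K1 0 s.length := spAux_length s K1 0
  have hB2len : B2.length = cntIn K2 0 s.length := spAux_length s K2 0
  have hsumlen : cntIn K1 0 s.length + cntIn K2 0 s.length = s.length := by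
    apply cntIn_add_compl
    intro i h0 hlen
    simp only [hK2def, Set.mem_setOf_eq]
    constructor
    · rintro ⟨_, h⟩; exact h
    · intro h; exact ⟨by omega, h⟩
  have hLlen : L.length = s.length + 1 := by
    simp only [hLdef, List.length_append, List.length_cons]
    omega
  -- the linearization function
  set F : O → ℕ := fun x => if x = o then B1.length
    else if inU e g o x then cntIn K1 0 (f x) else B1.length + 1 + cntIn K2 0 (f x) with hFdef
  have hFo : F o = B1.length := by simp [hFdef]
  have hFU : ∀ x, inU e g o x → F x = cntIn K1 0 (f x) := by
    intro x hx
    simp [hFdef, (hUops x hx).2, hx]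
  have hFnU : ∀ x, x ≠ o → ¬ inU e g o x → F x = B1.length + 1 + cntIn K2 0 (f x) := by
    intro x hxo hxn
    simp [hFdef, hxo, hxn]
  have hK2mem : ∀ x, x ∈ opsOf e → x ≠ o → ¬ inU e g o x → f x ∈ K2 := by
    intro x hx hxo hxn
    exact ⟨C.fL hx hxo, fun hK => hxn ((hK1iff x hx hxo).1 hK)⟩
  have hFUlt : ∀ x, inU e g o x → F x < B1.length := by
    intro x hx
    rw [hFU x hx, hB1len]
    apply cntIn_lt
    · exact C.fL (hUops x hx).1 (hUops x hx).2
    · simpa using (hK1iff x (hUops x hx).1 (hUops x hx).2).2 hx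
  have hFnUlt : ∀ x, x ∈ opsOf e → x ≠ o → ¬ inU e g o x →
      F x < L.length ∧ B1.length < F x := by
    intro x hx hxo hxn
    rw [hFnU x hxo hxn]
    have h2 : cntIn K2 0 (f x) < cntIn K2 0 s.length := by
      apply cntIn_lt _ _ (C.fL hx hxo)
      simpa using hK2mem x hx hxo hxn
    constructor
    · rw [hLlen]; omega
    · omega
  -- mapsTo
  have hmapsTo : ∀ x ∈ opsOf e, F x < L.length := by
    intro x hx
    by_cases hxo : x = o
    · subst hxo; rw [hFo, hLlen]
      have := hB1len ▸ (cntIn_le K1 0 s.length)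
      omega
    · by_cases hxU : inU e g o x
      · have := hFUlt x hxU
        have h2 : B1.length ≤ s.length := by
          rw [hB1len]; exact cntIn_le K1 0 s.length
        rw [hLlen]; omega
      · exact (hFnUlt x hx hxo hxU).1
  -- method preservation
  have hmeth : ∀ x m, hasMethod e x m → L[F x]? = some m := by
    intro x m hm
    have hx : x ∈ opsOf e := C.hasMethod_mem hm
    by_cases hxo : x = o
    · subst hxo
      have := C.method_o hm
      subst this
      rw [hFo, hLdef, List.getElem?_append_right (le_refl _)]
      simp
    · by_cases hxU : inU e g o x
      · rw [hFU x hxU, hLdef, List.getElem?_append_left (by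
          have := hFUlt x hxU
          rw [hFU x hxU] at this
          exact this)]
        have hfx : f x ∈ K1 := (hK1iff x hx hxo).2 hxU
        have := spAux_get (l := s) (K := K1) (n := 0) (i := f x)
          (C.fL hx hxo) (by simpa using hfx)
        rw [hB1def, this]
        exact C.hfm hxo hm
      · rw [hFnU x hxo hxU, hLdef]
        rw [List.getElem?_append_right (by omega)]
        have harith : B1.length + 1 + cntIn K2 0 (f x) - B1.length = cntIn K2 0 (f x) + 1 := by
          omega
        rw [harith, List.getElem?_cons_succ]
        have hfx : f x ∈ K2 := hK2mem x hx hxo hxU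
        have := spAux_get (l := s) (K := K2) (n := 0) (i := f x)
          (C.fL hx hxo) (by simpa using hfx)
        rw [hB2def, this]
        exact C.hfm hxo hm
  -- hb monotonicity
  have hhbmono : ∀ x y, hb e x y → F x < F y := by
    intro x y hxy
    have hx : x ∈ opsOf e := hb_mem_left C.he hxy
    have hy : y ∈ opsOf e := hb_mem_right hxy
    by_cases hxo : x = o
    · have hxy' : hb e o y := by rwa [hxo] at hxy
      have hyo : y ≠ o := by
        rintro rfl
        exact hb_irrefl C.he _ hxy'
      have hyU : ¬ inU e g o y := fun h => C.U_b h hxy'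
      rw [hxo, hFo]
      exact (hFnUlt y hy hyo hyU).2
    · by_cases hyo : y = o
      · have hxy' : hb e x o := by rwa [hyo] at hxy
        have hxU : inU e g o x := C.U_pred hxy'
        rw [hyo, hFo]
        exact hFUlt x hxU
      · by_cases hxU : inU e g o x
        · by_cases hyU : inU e g o y
          · rw [hFU x hxU, hFU y hyU]
            apply cntIn_lt _ _ (C.hbf hxo hyo hxy)
            simpa using (hK1iff x hx hxo).2 hxU
          · have h1 := hFUlt x hxU
            have h2 := (hFnUlt y hy hyo hyU).2
            omega
        · by_cases hyU : inU e g o y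
          · exact absurd (C.U_closed hxy hyU) hxU
          · rw [hFnU x hxo hxU, hFnU y hyo hyU]
            have := cntIn_lt (K := K2) (n := 0) (C.hbf hxo hyo hxy)
              (by simpa using hK2mem x hx hxo hxU)
            omega
  -- injectivity
  have hinjOn : ∀ x ∈ opsOf e, ∀ y ∈ opsOf e, F x = F y → x = y := by
    intro x hx y hy hFeq
    by_cases hxo : x = o <;> by_cases hyo : y = o
    · rw [hxo, hyo]
    · exfalso
      rw [hxo, hFo] at hFeq
      by_cases hyU : inU e g o y
      · have := hFUlt y hyU; omega
      · have := (hFnUlt y hy hyo hyU).2; omega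
    · exfalso
      rw [hyo, hFo] at hFeq
      by_cases hxU : inU e g o x
      · have := hFUlt x hxU; omega
      · have := (hFnUlt x hx hxo hxU).2; omega
    · by_cases hxU : inU e g o x <;> by_cases hyU : inU e g o y
      · rw [hFU x hxU, hFU y hyU] at hFeq
        have hfeq : f x = f y := by
          apply cntIn_inj (K := K1) (n := 0)
          · simpa using (hK1iff x hx hxo).2 hxU
          · simpa using (hK1iff y hy hyo).2 hyU
          · exact hFeq
        exact C.finj hx hxo hy hyo hfeq
      · exfalso
        have h1 := hFUlt x hxU
        have h2 := (hFnUlt y hy hyo hyU).2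
        rw [hFU x hxU] at hFeq
        rw [hFU x hxU] at h1
        omega
      · exfalso
        have h1 := hFUlt y hyU
        have h2 := (hFnUlt x hx hxo hxU).2
        omega
      · rw [hFnU x hxo hxU, hFnU y hyo hyU] at hFeq
        have hfeq : f x = f y := by
          apply cntIn_inj (K := K2) (n := 0)
          · simpa using hK2mem x hx hxo hxU
          · simpa using hK2mem y hy hyo hyU
          · omega
        exact C.finj hx hxo hy hyo hfeq
  -- surjectivity
  have hsurjOn : ∀ j, j < L.length → ∃ x ∈ opsOf e, F x = j := by
    intro j hj
    rcases Nat.lt_trichotomy j B1.length with hlt | heq | hgt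
    · rw [hB1len] at hlt
      obtain ⟨i, hilen, hiK, hicnt⟩ := cntIn_surj K1 0 hlt
      simp only [Nat.zero_add] at hiK
      obtain ⟨x, hxU, hfx⟩ := hiK
      refine ⟨x, (hUops x hxU).1, ?_⟩
      rw [hFU x hxU, hfx, hicnt]
    · exact ⟨o, C.ho, by rw [hFo, heq]⟩
    · have hj2 : j - (B1.length + 1) < cntIn K2 0 s.length := by
        rw [hLlen] at hj
        have h5 : B1.length + cntIn K2 0 s.length = s.length := by
          rw [hB1len]; exact hsumlen
        omega
      obtain ⟨i, hilen, hiK, hicnt⟩ := cntIn_surj K2 0 hj2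
      simp only [Nat.zero_add] at hiK
      obtain ⟨x, hx, hxo, hfx⟩ := C.sPosOp hilen
      have hxnU : ¬ inU e g o x := by
        intro hU
        have : f x ∈ K1 := (hK1iff x hx hxo).2 hU
        rw [hfx] at this
        exact hiK.2 this
      refine ⟨x, hx, ?_⟩
      rw [hFnU x hxo hxnU, hfx, hicnt]
      omega
  refine ⟨L, hSeq, F, ⟨⟨fun x hx => hmapsTo x hx, fun x hx y hy => hinjOn x hx y hy, ?_⟩,
    hmeth, hhbmono⟩⟩
  intro j hj
  obtain ⟨x, hx, hFx⟩ := hsurjOn j hj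
  exact ⟨x, hx, hFx⟩

end Ctx
end ERaux
end ERmain

/-- step-by-step linearizability of `EmptyRemove`. -/
theorem emptyRemove_step_by_step
    {D : Type u} {P : Type v} {O : Type w} [PartialOrder P]
    (e : List (PQEvent O D P)) (he : IsExec e) (hd : ExecDiff e)
    (o : O) (hconc : EmptyRemoveConc e o)
    (hsub : ∃ l, SeqPQ l ∧ LinTo (removeIdE o e) l) :
    ∃ l, SeqPQ l ∧ LinTo e l := by
  classical
  obtain ⟨l₀, g, ⟨hgbij, hgmeth, hghb⟩, ⟨d, hod⟩, hmatch⟩ := hconc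
  obtain ⟨s, ⟨qend, hreach⟩, f, ⟨hfbij, hfmeth, hfhb⟩⟩ := hsub
  exact ERaux.Ctx.main ⟨he, hd, hod, hgbij, hgmeth, hghb, hmatch, hreach, hfbij, hfmeth, hfhb⟩
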